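/- If T_1 is the lexicographically smallest NBC spanning tree of G, then every edge of T_1 is internally active, i.e. IN(T_1) = ∅. -/

import Mathlib

open SimpleGraph

variable {V : Type*}

/-- `T` is a spanning tree of `G`: a subgraph of `G` (on the same vertex set) that is a tree. -/
def IsSpanningTree (G T : SimpleGraph V) : Prop :=
  T ≤ G ∧ T.IsTree

/-- `cutset G T e`: the set of edges of `G` whose endpoints lie in the two different
components of `T` with the edge `e` deleted. -/
def cutset (G T : SimpleGraph V) (e : Sym2 V) : Set (Sym2 V) :=
  {f | f ∈ G.edgeSet ∧ ∀ u v : V, f = s(u, v) → ¬ (T.deleteEdges {e}).Reachable u v}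

/-- `cycset T f`: the edge set of the unique cycle of `T` with the edge `f` added
(an edge of the unicyclic connected graph `T + f` lies on the cycle iff deleting it
keeps the graph connected). -/
def cycset (T : SimpleGraph V) (f : Sym2 V) : Set (Sym2 V) :=
  {e | e ∈ (T ⊔ fromEdgeSet {f}).edgeSet ∧
    ((T ⊔ fromEdgeSet {f}).deleteEdges {e}).Connected}

/-- An edge `e` of `T` is internally active if it is the minimum of `cutset G T e`. -/
def InternallyActive [hlo : LinearOrder (Sym2 V)] (G T : SimpleGraph V) (e : Sym2 V) : Prop :=
  e ∈ T.edgeSet ∧ ∀ f ∈ cutset G T e, hlo.le e f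

/-- `IN G T`: the set of internally inactive edges of `T`. -/
def IN [LinearOrder (Sym2 V)] (G T : SimpleGraph V) : Set (Sym2 V) :=
  {e | e ∈ T.edgeSet ∧ ¬ InternallyActive G T e}

/-- `C` is the edge set of some cycle of `G`. -/
def IsCycleEdgeSet (G : SimpleGraph V) (C : Set (Sym2 V)) : Prop :=
  ∃ (v : V) (w : G.Walk v v), w.IsCycle ∧ C = {e | e ∈ w.edges}

/-- A broken circuit: the edge set of a cycle with its minimum edge removed. -/
def IsBrokenCircuit [hlo : LinearOrder (Sym2 V)] (G : SimpleGraph V) (B : Set (Sym2 V)) : Prop :=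
  ∃ (C : Set (Sym2 V)) (e : Sym2 V),
    IsCycleEdgeSet G C ∧ e ∈ C ∧ (∀ f ∈ C, hlo.le e f) ∧ B = C \ {e}

/-- A set of edges is NBC if it contains no broken circuit. -/
def IsNBC [LinearOrder (Sym2 V)] (G : SimpleGraph V) (S : Set (Sym2 V)) : Prop :=
  ∀ B : Set (Sym2 V), IsBrokenCircuit G B → ¬ B ⊆ S

/-- `T` is an NBC spanning tree of `G`. -/
def IsNBCSpanningTree [LinearOrder (Sym2 V)] (G T : SimpleGraph V) : Prop :=
  IsSpanningTree G T ∧ IsNBC G T.edgeSet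

/-- The edge set of `T` written as a list in increasing order. -/
noncomputable def edgeList [Fintype V] [hlo : LinearOrder (Sym2 V)] (T : SimpleGraph V) :
    List (Sym2 V) :=
  (Set.toFinite T.edgeSet).toFinset.sort (fun a b : Sym2 V => hlo.le a b)

/-- Lexicographic order on spanning trees via their sorted edge lists. -/
def treeLexLT [Fintype V] [hlo : LinearOrder (Sym2 V)] (T T' : SimpleGraph V) : Prop :=
  List.Lex (fun a b : Sym2 V => hlo.lt a b) (edgeList T) (edgeList T')

private lemma reach_trans {W : Type*} {H K : SimpleGraph W}
    (h : ∀ a b, K.Adj a b → H.Reachable a b) {u v : W} (huv : K.Reachable u v) :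
    H.Reachable u v := by
  obtain ⟨w⟩ := huv
  induction w with
  | nil => exact Reachable.refl _
  | cons ha _ ih => exact (h _ _ ha).trans ih

private lemma lex_aux {α : Type*} [LinearOrder α] (f : α) (l2 : List α) :
    ∀ (l1 : List α), l1.Pairwise (· < ·) → l2.Pairwise (· < ·) →
      f ∈ l1 → f ∉ l2 → (∀ g, g < f → (g ∈ l1 ↔ g ∈ l2)) →
      (∃ b ∈ l2, f ≤ b) → List.Lex (· < ·) l1 l2 := by
  induction l2 with
  | nil => intro l1 _ _ _ _ _ hw; simp at hw
  | cons b l2' ih =>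
    intro l1 h1s h2s hf1 hf2 hiff hw
    cases l1 with
    | nil => simp at hf1
    | cons a l1' =>
      rw [List.pairwise_cons] at h1s h2s
      rcases lt_trichotomy a b with hab | hab | hab
      · exact List.Lex.rel hab
      · subst hab
        have hfa : f ≠ a := fun h => hf2 (h ▸ List.mem_cons_self)
        have hf1' : f ∈ l1' := by
          rcases List.mem_cons.1 hf1 with h | h
          · exact absurd h hfa
          · exact h
        have haf : a < f := h1s.1 f hf1'
        refine List.Lex.cons (ih l1' h1s.2 h2s.2 hf1'
          (fun h => hf2 (List.mem_cons_of_mem _ h)) ?_ ?_)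
        · intro g hg
          constructor
          · intro hgl
            have hmem := (hiff g hg).1 (List.mem_cons_of_mem _ hgl)
            rcases List.mem_cons.1 hmem with h | h
            · exact absurd (h ▸ h1s.1 g hgl) (lt_irrefl _)
            · exact h
          · intro hgl
            have hmem := (hiff g hg).2 (List.mem_cons_of_mem _ hgl)
            rcases List.mem_cons.1 hmem with h | h
            · exact absurd (h ▸ h2s.1 g hgl) (lt_irrefl _)
            · exact h
        · obtain ⟨b', hb', hfb'⟩ := hw
          rcases List.mem_cons.1 hb' with h | h
          · exact absurd haf (not_lt.2 (h ▸ hfb'))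
          · exact ⟨b', h, hfb'⟩
      · exfalso
        have hbf : f < b := by
          rcases lt_trichotomy b f with h | h | h
          · have hbl1 := (hiff b h).2 (List.mem_cons_self)
            rcases List.mem_cons.1 hbl1 with h' | h'
            · exact absurd h' (ne_of_lt hab)
            · exact absurd (h1s.1 b h') (not_lt.2 hab.le)
          · exact absurd (h ▸ List.mem_cons_self) hf2
          · exact h
        rcases lt_trichotomy a f with h | h | h
        · exact absurd (h.trans hbf) hab.asymm
        · rw [← h] at hbf; exact absurd hbf hab.asymm
        · rcases List.mem_cons.1 hf1 with h' | h'
          · rw [h'] at h; exact absurd h (lt_irrefl _)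
          · exact absurd (h1s.1 f h') (not_lt.2 h.le)

/-- if `T1` is the lexicographically smallest NBC spanning tree of `G`,
then every edge of `T1` is internally active, i.e. `IN(T1) = ∅`. -/
theorem lex_smallest_nbc_tree_all_active
    {V : Type*} [Fintype V] [LinearOrder (Sym2 V)] (G : SimpleGraph V)
    (hconn : G.Connected)
    (T1 : SimpleGraph V) (hT1 : IsNBCSpanningTree G T1)
    (hmin : ∀ T, IsNBCSpanningTree G T → T ≠ T1 → treeLexLT T1 T) :
    IN G T1 = ∅ := by
  classical
  letI : PartialOrder (Sym2 V) := LinearOrder.toPartialOrder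
  obtain ⟨⟨hT1le, hT1tree⟩, hT1nbc⟩ := hT1
  by_contra hne
  obtain ⟨e, heT, hnact⟩ := Set.nonempty_iff_ne_empty.2 hne
  -- every edge of the tree T1 is a "bridge": its endpoints get disconnected
  have hbridge : ∀ u v : V, e = s(u, v) → ¬(T1.deleteEdges {e}).Reachable u v := by
    intro u v huv
    subst huv
    have hadj : T1.Adj u v := (mem_edgeSet _).1 heT
    have hbr := isAcyclic_iff_forall_adj_isBridge.1 hT1tree.IsAcyclic hadj
    simpa [deleteEdges] using (isBridge_iff.1 hbr)
  have hecut : e ∈ cutset G T1 e := ⟨edgeSet_mono hT1le heT, hbridge⟩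
  have hfin : (cutset G T1 e).Finite := Set.toFinite _
  obtain ⟨f, hfcut, hfmin⟩ := Set.exists_min_image (cutset G T1 e) id hfin ⟨e, hecut⟩
  simp only [id] at hfmin
  -- f < e since e is internally inactive
  have hfe : f < e := by
    have hex : ∃ g ∈ cutset G T1 e, g < e := by
      by_contra h
      push_neg at h
      exact hnact ⟨heT, h⟩
    obtain ⟨g, hg, hge⟩ := hex
    exact lt_of_le_of_lt (hfmin g hg) hge
  obtain ⟨x, y, hexy⟩ : ∃ x y, e = s(x, y) := by
    induction e using Sym2.ind with | _ x y => exact ⟨x, y, rfl⟩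
  subst hexy
  obtain ⟨a, b, hfab⟩ : ∃ a b, f = s(a, b) := by
    induction f using Sym2.ind with | _ a b => exact ⟨a, b, rfl⟩
  subst hfab
  have hfG : s(a, b) ∈ G.edgeSet := hfcut.1
  have habG : G.Adj a b := (mem_edgeSet _).1 hfG
  have hne_ab : a ≠ b := habG.ne
  have hnxy : ¬(T1.deleteEdges {s(x, y)}).Reachable x y := hbridge x y rfl
  have hnab : ¬(T1.deleteEdges {s(x, y)}).Reachable a b := hfcut.2 a b rfl
  set H := T1.deleteEdges {s(x, y)} with hH
  -- f is not an edge of T1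
  have hfT1 : s(a, b) ∉ T1.edgeSet := by
    intro hmem
    apply hnab
    have : H.Adj a b := by
      rw [hH, deleteEdges_adj]
      exact ⟨(mem_edgeSet _).1 hmem, by simpa using (ne_of_lt hfe)⟩
    exact this.reachable
  set T' := H ⊔ fromEdgeSet {s(a, b)} with hT'def
  have hT'adj_ab : T'.Adj a b := by
    rw [hT'def, sup_adj, fromEdgeSet_adj]
    exact Or.inr ⟨rfl, hne_ab⟩
  have hHleT' : H ≤ T' := le_sup_left
  -- H has (at most) two components
  have hcomp : ∀ u : V, H.Reachable u x ∨ H.Reachable u y := by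
    have hstep : ∀ (u t : V) (w : T1.Walk u t),
        (H.Reachable t x ∨ H.Reachable t y) → (H.Reachable u x ∨ H.Reachable u y) := by
      intro u t w
      induction w with
      | nil => exact id
      | cons hadj tail ih =>
        intro hbase
        rename_i p q r
        by_cases hcase : s(p, q) = s(x, y)
        · rcases Sym2.eq_iff.1 hcase with ⟨rfl, rfl⟩ | ⟨rfl, rfl⟩
          · exact Or.inl (Reachable.refl _)
          · exact Or.inr (Reachable.refl _)
        · have hHadj : H.Adj p q := by
            rw [hH, deleteEdges_adj]
            exact ⟨hadj, by simpa using hcase⟩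
          rcases ih hbase with hq | hq
          · exact Or.inl (hHadj.reachable.trans hq)
          · exact Or.inr (hHadj.reachable.trans hq)
    intro u
    obtain ⟨w⟩ := hT1tree.isConnected.preconnected u x
    exact hstep u x w (Or.inl (Reachable.refl _))
  -- x and y are reachable in T'
  have hxyT' : T'.Reachable x y := by
    rcases hcomp a with hax | hay
    · rcases hcomp b with hbx | hby
      · exact absurd (hax.trans hbx.symm) hnab
      · exact ((hax.symm.mono hHleT').trans hT'adj_ab.reachable).trans (hby.mono hHleT')
    · rcases hcomp b with hbx | hby
      · exact ((hbx.symm.mono hHleT').trans hT'adj_ab.symm.reachable).trans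
          (hay.mono hHleT')
      · exact absurd (hay.trans hby.symm) hnab
  have hT1reachT' : ∀ p q : V, T1.Adj p q → T'.Reachable p q := by
    intro p q hadj
    by_cases hcase : s(p, q) = s(x, y)
    · rcases Sym2.eq_iff.1 hcase with ⟨rfl, rfl⟩ | ⟨rfl, rfl⟩
      · exact hxyT'
      · exact hxyT'.symm
    · have hHadj : H.Adj p q := by
        rw [hH, deleteEdges_adj]
        exact ⟨hadj, by simpa using hcase⟩
      exact ((hHadj.reachable).mono hHleT')
  have hT'conn : T'.Connected := by
    haveI : Nonempty V := hconn.nonempty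
    exact ⟨fun u v => reach_trans hT1reachT' (hT1tree.isConnected.preconnected u v)⟩
  have hT'le : T' ≤ G := by
    rw [hT'def]
    refine sup_le (le_trans (deleteEdges_le _) hT1le) ?_
    intro u v huv
    rw [fromEdgeSet_adj, Set.mem_singleton_iff] at huv
    exact (mem_edgeSet _).1 (by rw [huv.1]; exact hfG)
  have hT'edge : T'.edgeSet = (T1.edgeSet \ {s(x, y)}) ∪ {s(a, b)} := by
    rw [hT'def, edgeSet_sup, hH, edgeSet_deleteEdges, edgeSet_fromEdgeSet]
    congr 1
    ext g
    simp only [Set.mem_diff, Set.mem_singleton_iff, Set.mem_setOf_eq, and_iff_left_iff_imp]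
    rintro rfl
    simpa using hne_ab
  have hT'acyc : T'.IsAcyclic := by
    intro v0 c hc
    by_cases hfc : s(a, b) ∈ c.edges
    · apply hnab
      have hreach : (T' \ fromEdgeSet {s(a, b)}).Reachable a b :=
        (adj_and_reachable_delete_edges_iff_exists_cycle.2 ⟨v0, c, hc, hfc⟩).2
      refine reach_trans ?_ hreach
      intro p q hpq
      rw [sdiff_adj] at hpq
      obtain ⟨hpq1, hpq2⟩ := hpq
      rw [hT'def, sup_adj] at hpq1
      rcases hpq1 with h | h
      · exact h.reachable
      · exact absurd h hpq2
    · have hsub : ∀ g ∈ c.edges, g ∈ T1.edgeSet := by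
        intro g hg
        have hmem := c.edges_subset_edgeSet hg
        rw [hT'edge] at hmem
        rcases hmem with h | h
        · exact h.1
        · rw [Set.mem_singleton_iff] at h
          exact absurd (h ▸ hg) hfc
      exact hT1tree.IsAcyclic (c.transfer T1 hsub) (hc.transfer hsub)
  -- T' is NBC
  have hT'nbc : IsNBC G T'.edgeSet := by
    intro B hB hBsub
    obtain ⟨C, c, hCc, hcC, hcmin, rfl⟩ := hB
    obtain ⟨v0, w, hw, rfl⟩ := hCc
    have hfB : s(a, b) ∈ {e | e ∈ w.edges} \ {c} := by
      by_contra hfB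
      refine hT1nbc _ ⟨{e | e ∈ w.edges}, c, ⟨v0, w, hw, rfl⟩, hcC, hcmin, rfl⟩ ?_
      intro g hg
      have hgT' := hBsub hg
      rw [hT'edge] at hgT'
      rcases hgT' with h | h
      · exact h.1
      · rw [Set.mem_singleton_iff] at h
        exact absurd (h ▸ hg) hfB
    obtain ⟨hfW, hfnec⟩ := hfB
    rw [Set.mem_singleton_iff] at hfnec
    have hcf : c < s(a, b) := lt_of_le_of_ne (hcmin _ hfW) (Ne.symm hfnec)
    have hcG : c ∈ G.edgeSet := w.edges_subset_edgeSet hcC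
    by_cases hccut : c ∈ cutset G T1 s(x, y)
    · exact absurd hcf (not_lt.2 (hfmin c hccut))
    · have hcreach : ∃ p0 q0, c = s(p0, q0) ∧ H.Reachable p0 q0 := by
        by_contra hno
        push_neg at hno
        exact hccut ⟨hcG, fun u v huv => hno u v huv⟩
      obtain ⟨p0, q0, hc_eq, hpq0⟩ := hcreach
      set K := fromEdgeSet {e | e ∈ w.edges} with hK
      have hKsub : ∀ g ∈ w.edges, g ∈ K.edgeSet := by
        intro g hg
        rw [hK, edgeSet_fromEdgeSet]
        exact ⟨hg, fun hdiag =>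
          (G.not_isDiag_of_mem_edgeSet (w.edges_subset_edgeSet hg)) hdiag⟩
      have hreachK : (K \ fromEdgeSet {s(a, b)}).Reachable a b := by
        refine (adj_and_reachable_delete_edges_iff_exists_cycle.2
          ⟨v0, w.transfer K hKsub, hw.transfer hKsub, ?_⟩).2
        rwa [Walk.edges_transfer]
      apply hnab
      refine reach_trans ?_ hreachK
      intro p q hpq
      rw [sdiff_adj, hK, fromEdgeSet_adj, fromEdgeSet_adj, Set.mem_setOf_eq] at hpq
      obtain ⟨⟨hmemW, hpqne⟩, hnot⟩ := hpq
      have hne_f : s(p, q) ≠ s(a, b) := fun h => hnot ⟨by rw [h]; exact rfl, hpqne⟩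
      by_cases hgc : s(p, q) = c
      · rw [hc_eq] at hgc
        rcases Sym2.eq_iff.1 hgc with ⟨rfl, rfl⟩ | ⟨rfl, rfl⟩
        · exact hpq0
        · exact hpq0.symm
      · have hmemB : s(p, q) ∈ {e | e ∈ w.edges} \ {c} := ⟨hmemW, hgc⟩
        have hmemT' := hBsub hmemB
        rw [hT'edge] at hmemT'
        rcases hmemT' with h | h
        · have : H.Adj p q := by
            rw [hH, deleteEdges_adj]
            exact ⟨(mem_edgeSet _).1 h.1, by simpa using h.2⟩
          exact this.reachable
        · rw [Set.mem_singleton_iff] at h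
          exact absurd h hne_f
  -- assemble
  have hT'nbcTree : IsNBCSpanningTree G T' := ⟨⟨hT'le, ⟨hT'conn, hT'acyc⟩⟩, hT'nbc⟩
  have hfT' : s(a, b) ∈ T'.edgeSet := by
    rw [hT'edge]; exact Or.inr rfl
  have hT'ne : T' ≠ T1 := fun h => hfT1 (h ▸ hfT')
  have hlex1 := hmin T' hT'nbcTree hT'ne
  have hlex2 : treeLexLT T' T1 := by
    refine lex_aux s(a, b) _ _ (List.sortedLT_iff_pairwise.1 (Finset.sortedLT_sort _)) (List.sortedLT_iff_pairwise.1 (Finset.sortedLT_sort _)) ?_ ?_ ?_ ?_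
    · simp only [edgeList, Finset.mem_sort, Set.Finite.mem_toFinset]; exact hfT'
    · simp only [edgeList, Finset.mem_sort, Set.Finite.mem_toFinset]; exact hfT1
    · intro g hg
      simp only [edgeList, Finset.mem_sort, Set.Finite.mem_toFinset]
      rw [hT'edge]
      constructor
      · rintro (h | h)
        · exact h.1
        · rw [Set.mem_singleton_iff] at h
          exact absurd h (ne_of_lt hg)
      · intro h
        refine Or.inl ⟨h, ?_⟩
        rw [Set.mem_singleton_iff]
        exact ne_of_lt (hg.trans hfe)
    · refine ⟨s(x, y), ?_, hfe.le⟩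
      simp only [edgeList, Finset.mem_sort, Set.Finite.mem_toFinset]
      exact heT
  haveI : IsAsymm (Sym2 V) (· < ·) := ⟨fun _ _ h h' => absurd h' h.asymm⟩
  have h2' : List.Lex (· < ·) (edgeList T') (edgeList T1) := hlex2
  have h1' : List.Lex (· < ·) (edgeList T1) (edgeList T') := hlex1
  exact absurd h1' (asymm h2')
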